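/- If a sequent Γ ⇒ C is provable in the multimodal Lambek calculus with brackets L◇_m, then ⟦Γ⟧ = ⟦C⟧ in the free group generated by the primitive types and the indexed bracket symbols. -/
import Mathlib


/-- Types of the multimodal bracketed Lambek calculus. -/
inductive ITy where
  | prim : ℕ → ITy
  | ldiv : ITy → ITy → ITy   -- ldiv A B = A \ B
  | rdiv : ITy → ITy → ITy   -- rdiv B A = B / A
  | mul  : ITy → ITy → ITy
  | dia  : ℕ → ITy → ITy
  | box  : ℕ → ITy → ITy
deriving DecidableEq

/-- Type trees: leaves labeled by types, internal nodes are indexed brackets. -/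
inductive ITree where
  | leaf : ITy → ITree
  | node : ℕ → List ITree → ITree

abbrev IHedge := List ITree

/-- Contexts: a hedge with one distinguished hole. -/
inductive ICtx where
  | hole : IHedge → IHedge → ICtx
  | brk  : ℕ → ICtx → IHedge → IHedge → ICtx

/-- Substitution of a hedge for the hole of a context. -/
def ICtx.plug : ICtx → IHedge → IHedge
  | .hole pre post, D => pre ++ D ++ post
  | .brk i c pre post, D => pre ++ (ITree.node i (c.plug D) :: post)

/-- Generators of the free group: primitive types, left brackets, right brackets. -/
abbrev Gen := ℕ ⊕ ℕ ⊕ ℕ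

def lb (i : ℕ) : FreeGroup Gen := FreeGroup.of (Sum.inr (Sum.inl i))
def rb (i : ℕ) : FreeGroup Gen := FreeGroup.of (Sum.inr (Sum.inr i))

/-- Free group interpretation of types. -/
def interpTy : ITy → FreeGroup Gen
  | .prim p => FreeGroup.of (Sum.inl p)
  | .ldiv A B => (interpTy A)⁻¹ * interpTy B
  | .rdiv B A => interpTy B * (interpTy A)⁻¹
  | .mul A B => interpTy A * interpTy B
  | .dia i A => lb i * interpTy A * rb i
  | .box i A => (lb i)⁻¹ * interpTy A * (rb i)⁻¹

mutual
/-- Free group interpretation of type trees. -/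
def interpTree : ITree → FreeGroup Gen
  | .leaf A => interpTy A
  | .node i ts => lb i * interpHedge ts * rb i
/-- Free group interpretation of hedges. -/
def interpHedge : List ITree → FreeGroup Gen
  | [] => 1
  | t :: ts => interpTree t * interpHedge ts
end

/-- Length of a type. -/
def lenTy : ITy → ℕ
  | .prim _ => 1
  | .ldiv A B => lenTy A + lenTy B
  | .rdiv B A => lenTy B + lenTy A
  | .mul A B => lenTy A + lenTy B
  | .dia _ A => lenTy A + 2
  | .box _ A => lenTy A + 2

/-- Number of occurrences of the primitive type `p_i` in a type. -/
def sigmaTy (i : ℕ) : ITy → ℕ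
  | .prim p => if p = i then 1 else 0
  | .ldiv A B => sigmaTy i A + sigmaTy i B
  | .rdiv B A => sigmaTy i B + sigmaTy i A
  | .mul A B => sigmaTy i A + sigmaTy i B
  | .dia _ A => sigmaTy i A
  | .box _ A => sigmaTy i A

/-- Total number of occurrences of `◇_i`, `□↓_i` in a type. -/
def tauTy (i : ℕ) : ITy → ℕ
  | .prim _ => 0
  | .ldiv A B => tauTy i A + tauTy i B
  | .rdiv B A => tauTy i B + tauTy i A
  | .mul A B => tauTy i A + tauTy i B
  | .dia j A => (if j = i then 1 else 0) + tauTy i A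
  | .box j A => (if j = i then 1 else 0) + tauTy i A

mutual
def sigmaTree (i : ℕ) : ITree → ℕ
  | .leaf A => sigmaTy i A
  | .node _ ts => sigmaHedge i ts
def sigmaHedge (i : ℕ) : List ITree → ℕ
  | [] => 0
  | t :: ts => sigmaTree i t + sigmaHedge i ts
end

mutual
/-- Total occurrences of `⟨_i`, `◇_i`, `□↓_i` in a tree. -/
def tauTree (i : ℕ) : ITree → ℕ
  | .leaf A => tauTy i A
  | .node j ts => (if j = i then 1 else 0) + tauHedge i ts
def tauHedge (i : ℕ) : List ITree → ℕ
  | [] => 0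
  | t :: ts => tauTree i t + tauHedge i ts
end

def sigmaCtx (i : ℕ) : ICtx → ℕ
  | .hole pre post => sigmaHedge i pre + sigmaHedge i post
  | .brk _ c pre post => sigmaHedge i pre + sigmaCtx i c + sigmaHedge i post

def tauCtx (i : ℕ) : ICtx → ℕ
  | .hole pre post => tauHedge i pre + tauHedge i post
  | .brk j c pre post => (if j = i then 1 else 0) + tauHedge i pre + tauCtx i c + tauHedge i post
/-- L◇_m : the multimodal Lambek calculus with brackets
(the antecedent must be nonempty in the right rules for the divisions). -/
inductive IProv : IHedge → ITy → Prop where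
  | id (p) : IProv [.leaf (.prim p)] (.prim p)
  | ldivL (G : IHedge) (D : ICtx) (A B C) :
      IProv G A → IProv (D.plug [.leaf B]) C →
      IProv (D.plug (G ++ [.leaf (.ldiv A B)])) C
  | ldivR (Pi : IHedge) (A B) : Pi ≠ [] →
      IProv (.leaf A :: Pi) B → IProv Pi (.ldiv A B)
  | rdivL (G : IHedge) (D : ICtx) (A B C) :
      IProv G A → IProv (D.plug [.leaf B]) C →
      IProv (D.plug (.leaf (.rdiv B A) :: G)) C
  | rdivR (Pi : IHedge) (A B) : Pi ≠ [] →
      IProv (Pi ++ [.leaf A]) B → IProv Pi (.rdiv B A)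
  | mulL (G : ICtx) (A B C) :
      IProv (G.plug [.leaf A, .leaf B]) C → IProv (G.plug [.leaf (.mul A B)]) C
  | mulR (G D : IHedge) (A B) :
      IProv G A → IProv D B → IProv (G ++ D) (.mul A B)
  | diaL (G : ICtx) (i A B) :
      IProv (G.plug [.node i [.leaf A]]) B → IProv (G.plug [.leaf (.dia i A)]) B
  | diaR (G : IHedge) (i A) :
      IProv G A → IProv [.node i G] (.dia i A)
  | boxL (G : ICtx) (i A B) :
      IProv (G.plug [.leaf A]) B → IProv (G.plug [.node i [.leaf (.box i A)]]) B
  | boxR (G : IHedge) (i A) :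
      IProv [.node i G] A → IProv G (.box i A)
  | cut (G : IHedge) (D : ICtx) (A B) :
      IProv G A → IProv (D.plug [.leaf A]) B → IProv (D.plug G) B

theorem interpHedge_append (a b : IHedge) :
    interpHedge (a ++ b) = interpHedge a * interpHedge b := by
  induction a with
  | nil => simp [interpHedge]
  | cons t ts ih => simp [interpHedge, ih, mul_assoc]

theorem interp_plug (c : ICtx) (D D' : IHedge)
    (h : interpHedge D = interpHedge D') :
    interpHedge (c.plug D) = interpHedge (c.plug D') := by
  induction c generalizing D D' with
  | hole pre post => simp [ICtx.plug, interpHedge_append, h]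
  | brk i c pre post ih =>
      simp [ICtx.plug, interpHedge_append, interpHedge, interpTree, ih D D' h]

/-- Soundness of the free group interpretation for L◇_m. -/
theorem free_group_soundness (G : IHedge) (C : ITy) (h : IProv G C) :
    interpHedge G = interpTy C := by
  induction h with
  | id p => simp [interpHedge, interpTree, interpTy]
  | ldivL G D A B C _ _ ih1 ih2 =>
      rw [interp_plug D _ [.leaf B]] <;>
        simp [interpHedge_append, interpHedge, interpTree, interpTy, ih1, ih2]
  | ldivR Pi A B _ _ ih =>
      simp only [interpHedge, interpTree, interpTy] at *
      rw [eq_inv_mul_iff_mul_eq, ih]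
  | rdivL G D A B C _ _ ih1 ih2 =>
      rw [interp_plug D _ [.leaf B]] <;>
        simp [interpHedge_append, interpHedge, interpTree, interpTy, ih1, ih2,
          mul_assoc]
  | rdivR Pi A B _ _ ih =>
      simp only [interpHedge_append, interpHedge, interpTree, interpTy, mul_one] at *
      rw [eq_mul_inv_iff_mul_eq, ih]
  | mulL G A B C _ ih =>
      rw [interp_plug G _ [.leaf A, .leaf B]] <;>
        simp [interpHedge, interpTree, interpTy, ih, mul_assoc]
  | mulR G D A B _ _ ih1 ih2 =>
      simp [interpHedge_append, interpTy, ih1, ih2]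
  | diaL G i A B _ ih =>
      rw [interp_plug G _ [.node i [.leaf A]]] <;>
        simp [interpHedge, interpTree, interpTy, ih, mul_assoc]
  | diaR G i A _ ih => simp [interpHedge, interpTree, interpTy, ih]
  | boxL G i A B _ ih =>
      rw [interp_plug G _ [.leaf A]] <;>
        simp [interpHedge, interpTree, interpTy, ih, mul_assoc]
  | boxR G i A _ ih =>
      simp only [interpHedge, interpTree, interpTy, mul_one] at *
      rw [← ih]; group
  | cut G D A B _ _ ih1 ih2 =>
      rw [interp_plug D _ [.leaf A]] <;>
        simp [interpHedge, interpTree, ih1, ih2]
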